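/- arXiv:1712.03324 — 2 statements merged into one kernel-verified Lean document; each statement's English description precedes it below -/
import Mathlib

section
/- Let (X, 𝓔) and (Y, 𝓕) be coarse spaces that both have coarse property C. Then the product coarse space (X × Y, 𝓔 ∗ 𝓕) has coarse property C. -/
/-- A coarse structure on a set `X`: a collection of subsets of `X × X` (entourages)
containing the diagonal and closed under subsets, finite unions, inverses and composition. -/
structure CoarseStructure (X : Type*) where
  sets : Set (Set (X × X))
  diagonal_mem : {p : X × X | p.1 = p.2} ∈ sets
  subset_mem : ∀ E ∈ sets, ∀ F : Set (X × X), F ⊆ E → F ∈ sets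
  union_mem : ∀ E ∈ sets, ∀ F ∈ sets, E ∪ F ∈ sets
  inv_mem : ∀ E ∈ sets, {p : X × X | (p.2, p.1) ∈ E} ∈ sets
  comp_mem : ∀ E ∈ sets, ∀ F ∈ sets,
    {p : X × X | ∃ y, (p.1, y) ∈ E ∧ (y, p.2) ∈ F} ∈ sets

/-- A family `𝒰` of subsets of `X` is `E`-disjoint if for all distinct `U, V ∈ 𝒰`,
`(U × V) ∩ E = ∅`. -/
def EDisjoint {X : Type*} (E : Set (X × X)) (𝒰 : Set (Set X)) : Prop :=
  ∀ U ∈ 𝒰, ∀ V ∈ 𝒰, U ≠ V → (U ×ˢ V) ∩ E = ∅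

/-- A family `𝒰` is uniformly bounded if `⋃_{U ∈ 𝒰} U × U` is an entourage. -/
def UniformlyBounded {X : Type*} (𝓔 : CoarseStructure X) (𝒰 : Set (Set X)) : Prop :=
  (⋃ U ∈ 𝒰, U ×ˢ U) ∈ 𝓔.sets

/-- The image of `E ⊆ (X × Y) × (X × Y)` under `p₁ × p₁`. -/
def projFst {X Y : Type*} (E : Set ((X × Y) × (X × Y))) : Set (X × X) :=
  (fun p : (X × Y) × (X × Y) => (p.1.1, p.2.1)) '' E

/-- The image of `E ⊆ (X × Y) × (X × Y)` under `p₂ × p₂`. -/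
def projSnd {X Y : Type*} (E : Set ((X × Y) × (X × Y))) : Set (Y × Y) :=
  (fun p : (X × Y) × (X × Y) => (p.1.2, p.2.2)) '' E

/-- The product coarse structure `𝓔 ∗ 𝓕` on `X × Y`. -/
def prodCoarse {X Y : Type*} (𝓔 : CoarseStructure X) (𝓕 : CoarseStructure Y) :
    CoarseStructure (X × Y) where
  sets := {E | projFst E ∈ 𝓔.sets ∧ projSnd E ∈ 𝓕.sets}
  diagonal_mem := by
    constructor
    · refine 𝓔.subset_mem _ 𝓔.diagonal_mem _ ?_
      rintro ⟨a, b⟩ ⟨⟨p, q⟩, hpq, h⟩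
      simp only [Set.mem_setOf_eq] at hpq
      cases h
      simp [hpq]
    · refine 𝓕.subset_mem _ 𝓕.diagonal_mem _ ?_
      rintro ⟨a, b⟩ ⟨⟨p, q⟩, hpq, h⟩
      simp only [Set.mem_setOf_eq] at hpq
      cases h
      simp [hpq]
  subset_mem := by
    rintro E ⟨hE1, hE2⟩ F hFE
    exact ⟨𝓔.subset_mem _ hE1 _ (Set.image_mono hFE),
      𝓕.subset_mem _ hE2 _ (Set.image_mono hFE)⟩
  union_mem := by
    rintro E ⟨hE1, hE2⟩ F ⟨hF1, hF2⟩
    constructor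
    · rw [projFst, Set.image_union]
      exact 𝓔.union_mem _ hE1 _ hF1
    · rw [projSnd, Set.image_union]
      exact 𝓕.union_mem _ hE2 _ hF2
  inv_mem := by
    rintro E ⟨hE1, hE2⟩
    constructor
    · refine 𝓔.subset_mem _ (𝓔.inv_mem _ hE1) _ ?_
      rintro ⟨a, b⟩ ⟨⟨p, q⟩, hpq, h⟩
      cases h
      exact ⟨(q, p), hpq, rfl⟩
    · refine 𝓕.subset_mem _ (𝓕.inv_mem _ hE2) _ ?_
      rintro ⟨a, b⟩ ⟨⟨p, q⟩, hpq, h⟩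
      cases h
      exact ⟨(q, p), hpq, rfl⟩
  comp_mem := by
    rintro E ⟨hE1, hE2⟩ F ⟨hF1, hF2⟩
    constructor
    · refine 𝓔.subset_mem _ (𝓔.comp_mem _ hE1 _ hF1) _ ?_
      rintro ⟨a, b⟩ ⟨⟨p, q⟩, ⟨y, hy1, hy2⟩, h⟩
      cases h
      exact ⟨y.1, ⟨(p, y), hy1, rfl⟩, ⟨(y, q), hy2, rfl⟩⟩
    · refine 𝓕.subset_mem _ (𝓕.comp_mem _ hE2 _ hF2) _ ?_
      rintro ⟨a, b⟩ ⟨⟨p, q⟩, ⟨y, hy1, hy2⟩, h⟩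
      cases h
      exact ⟨y.2, ⟨(p, y), hy1, rfl⟩, ⟨(y, q), hy2, rfl⟩⟩
/-- `Y` admits an `(E, n)`-decomposition over `𝒰` if `Y = Y¹ ∪ ⋯ ∪ Yⁿ` where each `Yⁱ`
is the union of an `E`-disjoint subfamily of `𝒰`. -/
def AdmitsDecomposition {X : Type*} (E : Set (X × X)) (n : ℕ) (Y : Set X)
    (𝒰 : Set (Set X)) : Prop :=
  ∃ Z : Fin n → Set X, Y = ⋃ i, Z i ∧
    ∀ i, ∃ 𝒟 ⊆ 𝒰, EDisjoint E 𝒟 ∧ Z i = ⋃₀ 𝒟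

/-- Coarse property C: for every increasing sequence of entourages `E₁ ⊆ E₂ ⊆ ⋯`
there are finitely many families `𝒰₁, …, 𝒰ₙ` that together cover `X`, with `𝒰ᵢ`
being `Eᵢ`-disjoint and uniformly bounded. -/
def CoarsePropertyC {X : Type*} (𝓔 : CoarseStructure X) : Prop :=
  ∀ E : ℕ → Set (X × X), (∀ i, E i ∈ 𝓔.sets) → (∀ i, E i ⊆ E (i + 1)) →
    ∃ n : ℕ, ∃ 𝒰 : ℕ → Set (Set X),
      (∀ x : X, ∃ i < n, ∃ U ∈ 𝒰 i, x ∈ U) ∧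
      (∀ i < n, EDisjoint (E i) (𝒰 i)) ∧
      (∀ i < n, UniformlyBounded 𝓔 (𝒰 i))

/-- The sequence `n` witnesses coarse countable asymptotic dimension for `(X, 𝓔)`:
for every sequence of entourages `Kᵢ` there is a finite chain of families starting at
`{X}`, where each member of the `i`-th family admits a `(Kᵢ, nᵢ)`-decomposition over the
next family, ending with a uniformly bounded family. -/
def CAsdimWitness {X : Type*} (𝓔 : CoarseStructure X) (n : ℕ → ℕ) : Prop :=
  ∀ K : ℕ → Set (X × X), (∀ i, K i ∈ 𝓔.sets) →
    ∃ r : ℕ, ∃ 𝒱 : ℕ → Set (Set X),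
      𝒱 0 = {Set.univ} ∧
      (∀ i < r, ∀ V ∈ 𝒱 i, AdmitsDecomposition (K i) (n i) V (𝒱 (i + 1))) ∧
      UniformlyBounded 𝓔 (𝒱 r)

/-- Coarse countable asymptotic dimension. -/
def CoarseCountableAsdim {X : Type*} (𝓔 : CoarseStructure X) : Prop :=
  ∃ n : ℕ → ℕ, (∀ i, 0 < n i) ∧ CAsdimWitness 𝓔 n

/-- Straight finite coarse decomposition complexity (sFCDC). -/
def SFCDC {X : Type*} (𝓔 : CoarseStructure X) : Prop :=
  ∀ L : ℕ → Set (X × X), (∀ i, L i ∈ 𝓔.sets) →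
    ∃ m : ℕ, ∃ 𝒱 : ℕ → Set (Set X),
      𝒱 0 = {Set.univ} ∧
      (∀ i < m, ∀ V ∈ 𝒱 i, AdmitsDecomposition (L i) 2 V (𝒱 (i + 1))) ∧
      UniformlyBounded 𝓔 (𝒱 m)

/-! Split the levels into consecutive blocks `f j ≤ t < f (j + 1)`. Block `j` holds the
`X`-families given by property C of `X` for the `X`-shadows of `E (f j), E (f j + 1), …`,
and their number determines `f (j + 1)`. Property C of `Y`, applied once to the `Y`-shadows
of `E (f 1) ⊆ E (f 2) ⊆ ⋯`, gives families `𝒱 j`. At level `t` of block `j` take the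
rectangles `U × V` with `U` from the `t`-th `X`-family and `V ∈ 𝒱 j`: two distinct ones differ
in `U`, which the `X`-shadow of `E t` does not connect, or in `V`, which the `Y`-shadow of
`E (f (j + 1)) ⊇ E t` does not connect. -/

open Function Set

section Families

variable {X Y : Type*}

theorem EDisjoint.empty (E : Set (X × X)) : EDisjoint E ∅ := by
  simp [EDisjoint]

theorem EDisjoint.mono {E F : Set (X × X)} {𝒰 : Set (Set X)} (hEF : E ⊆ F)
    (h : EDisjoint F 𝒰) : EDisjoint E 𝒰 := fun U hU V hV hUV =>
  subset_empty_iff.mp <| (h U hU V hV hUV).subset.trans' (inter_subset_inter_right _ hEF)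

theorem UniformlyBounded.empty (𝓔 : CoarseStructure X) : UniformlyBounded 𝓔 ∅ :=
  𝓔.subset_mem _ 𝓔.diagonal_mem _ (by simp)

theorem EDisjoint.image2_prod {E : Set ((X × Y) × (X × Y))} {𝒰 : Set (Set X)}
    {𝒱 : Set (Set Y)} (h𝒰 : EDisjoint (projFst E) 𝒰) (h𝒱 : EDisjoint (projSnd E) 𝒱) :
    EDisjoint E (image2 (· ×ˢ ·) 𝒰 𝒱) := by
  rintro _ ⟨U, hU, V, hV, rfl⟩ _ ⟨U', hU', V', hV', rfl⟩ hne
  refine eq_empty_iff_forall_notMem.mpr fun ⟨p, q⟩ ⟨⟨hp, hq⟩, hpq⟩ => ?_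
  by_cases hUU : U = U'
  · have hVV : V ≠ V' := fun hVV => hne (by rw [hUU, hVV])
    exact (h𝒱 V hV V' hV' hVV).subset ⟨⟨hp.2, hq.2⟩, ⟨(p, q), hpq, rfl⟩⟩
  · exact (h𝒰 U hU U' hU' hUU).subset ⟨⟨hp.1, hq.1⟩, ⟨(p, q), hpq, rfl⟩⟩

theorem UniformlyBounded.image2_prod {𝓔 : CoarseStructure X} {𝓕 : CoarseStructure Y}
    {𝒰 : Set (Set X)} {𝒱 : Set (Set Y)} (h𝒰 : UniformlyBounded 𝓔 𝒰)
    (h𝒱 : UniformlyBounded 𝓕 𝒱) :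
    UniformlyBounded (prodCoarse 𝓔 𝓕) (image2 (· ×ˢ ·) 𝒰 𝒱) := by
  constructor
  · refine 𝓔.subset_mem _ h𝒰 _ ?_
    rintro _ ⟨⟨p, q⟩, hpq, rfl⟩
    obtain ⟨_, ⟨U, hU, V, -, rfl⟩, hp, hq⟩ := mem_iUnion₂.mp hpq
    exact mem_biUnion hU ⟨hp.1, hq.1⟩
  · refine 𝓕.subset_mem _ h𝒱 _ ?_
    rintro _ ⟨⟨p, q⟩, hpq, rfl⟩
    obtain ⟨_, ⟨U, -, V, hV, rfl⟩, hp, hq⟩ := mem_iUnion₂.mp hpq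
    exact mem_biUnion hV ⟨hp.2, hq.2⟩

/-- The levels missed by `ℓ` are filled with the empty family. -/
theorem exists_nat_indexed_of_injective_levels {ι : Type*} [Finite ι]
    (𝓔 : CoarseStructure X) {E : ℕ → Set (X × X)} {ℓ : ι → ℕ} (hℓ : Injective ℓ)
    {𝒰 : ι → Set (Set X)} (hcov : ∀ x, ∃ k, ∃ U ∈ 𝒰 k, x ∈ U)
    (hdisj : ∀ k, EDisjoint (E (ℓ k)) (𝒰 k)) (hub : ∀ k, UniformlyBounded 𝓔 (𝒰 k)) :
    ∃ n : ℕ, ∃ 𝒰' : ℕ → Set (Set X),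
      (∀ x : X, ∃ i < n, ∃ U ∈ 𝒰' i, x ∈ U) ∧
      (∀ i < n, EDisjoint (E i) (𝒰' i)) ∧
      (∀ i < n, UniformlyBounded 𝓔 (𝒰' i)) := by
  obtain ⟨b, hb⟩ := Finite.bddAbove_range ℓ
  have hext : ∀ i, extend ℓ 𝒰 (fun _ => ∅) i = ∅ ∨ ∃ k, ℓ k = i := fun i => by
    by_cases hi : ∃ k, ℓ k = i
    · exact Or.inr hi
    · exact Or.inl (extend_apply' _ _ _ hi)
  refine ⟨b + 1, extend ℓ 𝒰 (fun _ => ∅), fun x => ?_, fun i _ => ?_, fun i _ => ?_⟩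
  · obtain ⟨k, U, hU, hx⟩ := hcov x
    exact ⟨ℓ k, Nat.lt_succ_of_le (hb ⟨k, rfl⟩), U, by rwa [hℓ.extend_apply], hx⟩
  · rcases hext i with h | ⟨k, rfl⟩
    · rw [h]; exact EDisjoint.empty _
    · exact hℓ.extend_apply _ _ k ▸ hdisj k
  · rcases hext i with h | ⟨k, rfl⟩
    · rw [h]; exact UniformlyBounded.empty 𝓔
    · exact hℓ.extend_apply _ _ k ▸ hub k

end Families

theorem injective_sigma_offset {m : ℕ} {f len : ℕ → ℕ} (hf : ∀ j, f j + len j ≤ f (j + 1)) :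
    Injective (fun k : Σ j : Fin m, Fin (len j) => f k.1 + k.2) := by
  have hmono : Monotone f := monotone_nat_of_le_succ fun j => (hf j).trans' (by omega)
  have hlt : ∀ {j j' : ℕ} (i : Fin (len j)) (i' : Fin (len j')), j < j' → f j + i < f j' + i' :=
    fun {j _} i _ hjj' => by have := hf j; have := hmono (show j + 1 ≤ _ from hjj'); omega
  rintro ⟨j, i⟩ ⟨j', i'⟩ h
  obtain rfl : j = j' := Fin.ext <| by
    by_contra hne
    rcases Nat.lt_or_gt_of_ne hne with hjj' | hjj'
    · exact (hlt i i' hjj').ne h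
    · exact (hlt i' i hjj').ne h.symm
  obtain rfl : i = i' := Fin.ext (by simpa using h)
  rfl

/-- Coarse property C is preserved by finite coarse direct products:
if `(X, 𝓔)` and `(Y, 𝓕)` have coarse property C, then so does `(X × Y, 𝓔 ∗ 𝓕)`. -/
theorem coarsePropertyC_prod {X Y : Type*} (𝓔 : CoarseStructure X) (𝓕 : CoarseStructure Y)
    (hX : CoarsePropertyC 𝓔) (hY : CoarsePropertyC 𝓕) :
    CoarsePropertyC (prodCoarse 𝓔 𝓕) := by
  intro E hE hEsucc
  have hEm : Monotone E := monotone_nat_of_le_succ hEsucc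
  choose len 𝒰 h𝒰cov h𝒰disj h𝒰ub using fun o : ℕ =>
    hX (fun i => projFst (E (o + i))) (fun i => (hE _).1) (fun i => image_mono (hEsucc _))
  let f : ℕ → ℕ := fun j => Nat.rec 0 (fun _ o => o + len o) j
  have hf : ∀ j, f (j + 1) = f j + len (f j) := fun _ => rfl
  obtain ⟨m, 𝒱, h𝒱cov, h𝒱disj, h𝒱ub⟩ := hY (fun j => projSnd (E (f (j + 1))))
    (fun j => (hE _).2) (fun j => image_mono (hEm (by rw [hf (j + 1)]; omega)))
  refine exists_nat_indexed_of_injective_levels (ι := Σ j : Fin m, Fin (len (f j))) _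
    (injective_sigma_offset (fun j => (hf j).ge))
    (𝒰 := fun k => image2 (· ×ˢ ·) (𝒰 (f k.1) k.2) (𝒱 k.1)) ?_ ?_ ?_
  · rintro ⟨x, y⟩
    obtain ⟨j, hj, V, hV, hy⟩ := h𝒱cov y
    obtain ⟨i, hi, U, hU, hx⟩ := h𝒰cov (f j) x
    exact ⟨⟨⟨j, hj⟩, ⟨i, hi⟩⟩, _, mem_image2_of_mem hU hV, hx, hy⟩
  · rintro ⟨j, i⟩
    exact (h𝒰disj _ i i.2).image2_prod
      ((h𝒱disj j j.2).mono (image_mono (hEm (by rw [hf]; omega))))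
  · rintro ⟨j, i⟩
    exact (h𝒰ub _ i i.2).image2_prod (h𝒱ub j j.2)
end

section
/- Consider ℕ with its usual metric and the unit interval [0,1] with its usual metric, and equip ℕ × [0,1] with the product metric d((n,s),(m,t)) = max(|n − m|, |s − t|). Then the C₀-coarse structure on the metric space ℕ × [0,1] is a proper subset of the product coarse structure 𝓔₀ ∗ 𝓕₀, where 𝓔₀ is the C₀-coarse structure on ℕ and 𝓕₀ is the C₀-coarse structure on [0,1]: every entourage of the C₀-coarse structure on ℕ × [0,1] belongs to 𝓔₀ ∗ 𝓕₀, and there exists a set E ⊆ (ℕ × [0,1]) × (ℕ × [0,1]) belonging to 𝓔₀ ∗ 𝓕₀ that is not in the C₀-coarse structure on ℕ × [0,1]. -/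
/-- `E` is an entourage of the `C₀`-coarse structure on a metric space `Z`: for every
`ε > 0` there is a bounded set `B ⊆ Z` such that `dist z w < ε` for every `(z, w) ∈ E`
with `(z, w) ∉ B × B`. -/
def IsC0Entourage {Z : Type*} [MetricSpace Z] (E : Set (Z × Z)) : Prop :=
  ∀ ε : ℝ, 0 < ε → ∃ B : Set Z, Bornology.IsBounded B ∧
    ∀ p ∈ E, p ∉ B ×ˢ B → dist p.1 p.2 < ε

/-!
The projections are `1`-Lipschitz, and Lipschitz maps carry `C₀`-entourages to
`C₀`-entourages; this gives the inclusion. For properness take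
`E = {((n, 0), (n, 1)) : n ∈ ℕ}`: its first projection lies in the diagonal and its second
lives in the bounded space `[0,1]`, so both are `C₀`, yet all its pairs are at distance `1`
and their first points leave every bounded subset of `ℕ × [0,1]`.
-/

namespace IsC0Entourage

variable {Z W : Type*} [MetricSpace Z] [MetricSpace W]

theorem of_subset_id {E : Set (Z × Z)} (hE : E ⊆ SetRel.id) : IsC0Entourage E := by
  intro ε hε
  refine ⟨∅, Bornology.isBounded_empty, fun p hp _ => ?_⟩
  rw [show p.1 = p.2 from hE hp, dist_self]
  exact hε

theorem of_boundedSpace [BoundedSpace Z] (E : Set (Z × Z)) : IsC0Entourage E := fun _ _ =>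
  ⟨Set.univ, Bornology.IsBounded.all _, fun _ _ hp => (hp ⟨trivial, trivial⟩).elim⟩

theorem image_prodMap {E : Set (Z × Z)} (hE : IsC0Entourage E) {K : NNReal} {f : Z → W}
    (hf : LipschitzWith K f) : IsC0Entourage (Prod.map f f '' E) := by
  intro ε hε
  obtain ⟨B, hB, hBE⟩ := hE (ε / (K + 1)) (by positivity)
  refine ⟨f '' B, hf.isBounded_image hB, ?_⟩
  rintro _ ⟨⟨z, w⟩, hzw, rfl⟩ hfzw
  have hzw_far : (z, w) ∉ B ×ˢ B := fun ⟨hz, hw⟩ =>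
    hfzw ⟨Set.mem_image_of_mem f hz, Set.mem_image_of_mem f hw⟩
  calc dist (f z) (f w) ≤ K * dist z w := hf.dist_le_mul z w
    _ ≤ K * (ε / (K + 1)) := by gcongr; exact (hBE _ hzw hzw_far).le
    _ < ε := by rw [mul_div_assoc', div_lt_iff₀ (by positivity)]; nlinarith

theorem isBounded_setOf_le_dist {E : Set (Z × Z)} (hE : IsC0Entourage E) {δ : ℝ}
    (hδ : 0 < δ) :
    Bornology.IsBounded {z | ∃ w, (z, w) ∈ E ∧ δ ≤ dist z w} := by
  obtain ⟨B, hB, hBE⟩ := hE δ hδ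
  refine hB.subset ?_
  rintro z ⟨w, hzw, hδzw⟩
  by_contra hz
  exact (hBE _ hzw fun h => hz h.1).not_ge hδzw

end IsC0Entourage

/-- On `ℕ × [0,1]` with the max product metric (Mathlib's `Prod` metric), the
`C₀`-coarse structure is a proper subset of the product `𝓔₀ ∗ 𝓕₀` of the
`C₀`-coarse structures of the factors: every `C₀`-entourage of `ℕ × [0,1]` has
`C₀` coordinate projections, and there is a set with `C₀` coordinate projections
that is not a `C₀`-entourage of `ℕ × [0,1]`. -/
theorem c0_prod_proper :
    (∀ E : Set ((ℕ × ↥(Set.Icc (0:ℝ) 1)) × (ℕ × ↥(Set.Icc (0:ℝ) 1))),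
      IsC0Entourage E → IsC0Entourage (projFst E) ∧ IsC0Entourage (projSnd E)) ∧
    (∃ E : Set ((ℕ × ↥(Set.Icc (0:ℝ) 1)) × (ℕ × ↥(Set.Icc (0:ℝ) 1))),
      IsC0Entourage (projFst E) ∧ IsC0Entourage (projSnd E) ∧ ¬ IsC0Entourage E) := by
  refine ⟨fun E hE => ⟨hE.image_prodMap LipschitzWith.prod_fst, .of_boundedSpace _⟩,
    Set.range fun n : ℕ => ((n, 0), (n, 1)), .of_subset_id ?_, .of_boundedSpace _, fun hE => ?_⟩
  · rintro _ ⟨_, ⟨n, rfl⟩, rfl⟩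
    rfl
  have hfar : Set.range (fun n : ℕ => ((n, 0) : ℕ × Set.Icc (0:ℝ) 1)) ⊆
      {z | ∃ w, (z, w) ∈ Set.range (fun n : ℕ => ((n, 0), (n, 1))) ∧ 1 ≤ dist z w} := by
    rintro _ ⟨n, rfl⟩
    exact ⟨(n, 1), ⟨n, rfl⟩, by simp [Prod.dist_eq, Subtype.dist_eq]⟩
  have hN := LipschitzWith.prod_fst.isBounded_image
    ((hE.isBounded_setOf_le_dist one_pos).subset hfar)
  rw [← Set.range_comp, Function.comp_def, Set.range_id', isBounded_iff_bddBelow_bddAbove] at hN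
  exact not_bddAbove_univ hN.2
end
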